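/- arXiv:2511.00287 — 5 statements merged into one kernel-verified Lean document; each statement's English description precedes it below -/
import Mathlib

section
/- In U(osp(1|2)), the central elements C = x_{-2δ}x_{2δ} + (1/2)h + (1/4)h² and Ω = C - (1/4)(x_δ x_{-δ} - x_{-δ} x_δ) satisfy the quadratic relation 4C² - (8Ω - 1)C + 2Ω(2Ω - 1) = 0. -/
/-- In any associative unital `ℂ`-algebra with elements `X = x_δ`, `Y = x_{-δ}`, `H = h`
satisfying the defining relations of `U(osp(1|2))`, the central elements
`C = x_{-2δ}x_{2δ} + (1/2)h + (1/4)h²` (with `x_{2δ} = x_δ²`, `x_{-2δ} = -x_{-δ}²`) and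
`Ω = C - (1/4)(x_δ x_{-δ} - x_{-δ} x_δ)` satisfy `4C² - (8Ω - 1)C + 2Ω(2Ω - 1) = 0`. -/
theorem casimir_quadratic_relation (A : Type*) [Ring A] [Algebra ℂ A]
    (X Y H : A)
    (h1 : X * Y + Y * X = H)
    (h2 : H * X - X * H = X)
    (h3 : H * Y - Y * H = -Y) :
    let C : A := (-(Y ^ 2)) * X ^ 2 + ((1:ℂ)/2) • H + ((1:ℂ)/4) • H ^ 2
    let Ω : A := C - ((1:ℂ)/4) • (X * Y - Y * X)
    (4:ℂ) • C ^ 2 - ((8:ℂ) • Ω - 1) * C + ((2:ℂ) • Ω) * ((2:ℂ) • Ω - 1) = 0 := by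
  intro C Ω
  have hXY : X * Y = H - Y * X := by rw [eq_sub_iff_add_eq, h1]
  have hHX : H * X = X + X * H := sub_eq_iff_eq_add.mp h2
  have hHY : H * Y = -Y + Y * H := sub_eq_iff_eq_add.mp h3
  set u : A := ((1:ℂ)/2) • H - Y * X with hu
  have e2 : H * (Y * X) = Y * X * H := by
    calc H * (Y * X) = (H * Y) * X := by noncomm_ring
    _ = (-Y + Y * H) * X := by rw [hHY]
    _ = -(Y * X) + Y * (H * X) := by noncomm_ring
    _ = -(Y * X) + Y * (X + X * H) := by rw [hHX]
    _ = Y * X * H := by noncomm_ring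
  have e1 : (Y * X) * (Y * X) = Y * X * H + Y * X - Y * Y * (X * X) := by
    calc (Y * X) * (Y * X) = Y * (X * Y) * X := by noncomm_ring
    _ = Y * (H - Y * X) * X := by rw [hXY]
    _ = Y * (H * X) - Y * Y * (X * X) := by noncomm_ring
    _ = Y * (X + X * H) - Y * Y * (X * X) := by rw [hHX]
    _ = Y * X * H + Y * X - Y * Y * (X * X) := by noncomm_ring
  have huu : u * u = ((1:ℂ)/4) • (H * H) - ((1:ℂ)/2) • (H * (Y * X))
      - ((1:ℂ)/2) • (Y * X * H) + (Y * X) * (Y * X) := by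
    simp only [hu, sub_mul, mul_sub, smul_mul_assoc, mul_smul_comm, smul_smul]
    norm_num
    module
  have hC : C = u * u + u := by
    show (-(Y ^ 2)) * X ^ 2 + ((1:ℂ)/2) • H + ((1:ℂ)/4) • H ^ 2 = u * u + u
    rw [huu, e1, e2, hu]
    simp only [pow_two]
    simp only [mul_assoc, neg_mul]
    module
  have hΩ : Ω = u * u + ((1:ℂ)/2) • u := by
    show C - ((1:ℂ)/4) • (X * Y - Y * X) = u * u + ((1:ℂ)/2) • u
    rw [hC, hXY, hu]
    simp only [smul_sub, smul_smul]
    norm_num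
    module
  rw [hC, hΩ]
  simp only [pow_two, mul_add, add_mul, mul_sub, sub_mul, mul_one, one_mul,
    smul_add, smul_sub, smul_smul, smul_mul_assoc, mul_smul_comm, mul_assoc]
  norm_num
  module
end

section
/- Let g(x) ∈ ℂ[x] have degree n ≥ 1 and consider ℂ[x] as a module over the polynomial ring ℂ[H] where H acts by H·f = x f' + x g' f + (1/2) f. Then ℂ[x] is a free ℂ[H]-module of rank n with basis {1, x, ..., x^{n-1}}. -/
/-!
`H` is multiplication by `x g'`, of degree `n`, plus the Euler-type operator `x∂ + 1/2`, which does
not raise degrees; so `H` raises the degree of every nonzero polynomial by exactly `n`. Hence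
`c(H) x^p` has degree `p + n deg c`, and these degrees are distinct for distinct `p < n`: a
combination `∑ c_p(H) x^p` has no cancellation among leading terms, which gives independence,
and since `p + n d` runs once through every natural number, the leading term of any `f` can be
removed by subtracting a multiple of some `H^d x^p`, which gives generation.
-/

open Polynomial

/-- The operator `H = x∂ + x g'(x) + 1/2` on `ℂ[x]`, i.e.
`H·f = x f' + x g' f + (1/2) f`, as a `ℂ`-linear endomorphism. -/
noncomputable def Hop (g : Polynomial ℂ) : Module.End ℂ (Polynomial ℂ) :=
  (LinearMap.mulLeft ℂ (X : Polynomial ℂ)).comp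
      (derivative : Polynomial ℂ →ₗ[ℂ] Polynomial ℂ)
    + LinearMap.mulLeft ℂ ((X : Polynomial ℂ) * derivative g)
    + ((1:ℂ)/2) • LinearMap.id

open scoped Function

namespace Polynomial

variable {K : Type*} [Field K]

def ShiftsDegree (T : Module.End K K[X]) (n : ℕ) : Prop :=
  ∀ f, (T f).degree = f.degree + n

namespace ShiftsDegree

variable {T S : Module.End K K[X]} {m n : ℕ}

theorem mul (hS : ShiftsDegree S m) (hT : ShiftsDegree T n) : ShiftsDegree (S * T) (m + n) := by
  intro f
  rw [Module.End.mul_apply, hS, hT, add_comm m, Nat.cast_add, add_assoc]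

theorem pow (hT : ShiftsDegree T n) (i : ℕ) : ShiftsDegree (T ^ i) (i * n) := by
  induction i with
  | zero => intro f; simp
  | succ i ih => rw [pow_succ, add_one_mul]; exact ih.mul hT

theorem degree_aeval (hT : ShiftsDegree T n) (hn : 0 < n) {c : K[X]} (hc : c ≠ 0) (f : K[X]) :
    (aeval T c f).degree = f.degree + ↑(c.natDegree * n) := by
  rcases eq_or_ne f 0 with rfl | hf
  · simp
  induction hd : c.natDegree using Nat.strong_induction_on generalizing c with
  | _ d ih =>
  have hlead : (c.leadingCoeff • (T ^ d) f).degree = f.degree + ↑(d * n) := by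
    rw [degree_smul_of_smul_regular _ (IsSMulRegular.of_ne_zero (leadingCoeff_ne_zero.2 hc)),
      hT.pow d f]
  rw [← c.eraseLead_add_C_mul_X_pow, map_add, LinearMap.add_apply, map_mul, aeval_C, map_pow,
    aeval_X, Module.End.mul_apply, Module.algebraMap_end_apply, hd]
  rcases eq_or_ne c.eraseLead 0 with h0 | hc'
  · rw [h0, map_zero, LinearMap.zero_apply, zero_add, hlead]
  have hlt := hd ▸ c.eraseLead_natDegree_lt_or_eraseLead_eq_zero.resolve_right hc'
  have hlower : (aeval T c.eraseLead f).degree < f.degree + ↑(d * n) := by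
    rw [ih _ hlt hc' rfl, degree_eq_natDegree hf]
    norm_cast
    gcongr
  rw [degree_add_eq_right_of_degree_lt (hlead ▸ hlower), hlead]

theorem degree_aeval_X_pow (hT : ShiftsDegree T n) (hn : 0 < n) {c : K[X]} (hc : c ≠ 0) (p : ℕ) :
    (aeval T c (X ^ p)).degree = ↑(p + c.natDegree * n) := by
  rw [hT.degree_aeval hn hc, degree_X_pow, Nat.cast_add]

end ShiftsDegree

variable (T : Module.End K K[X]) (n : ℕ)

/-- Freeness of `K[X]` over `K[T]` with basis `1, X, …, X ^ (n - 1)` is bijectivity of this map. -/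
noncomputable def aevalXPowSum : (Fin n → K[X]) →ₗ[K] K[X] where
  toFun c := ∑ p, aeval T (c p) (X ^ (p : ℕ))
  map_add' c d := by simp [Finset.sum_add_distrib]
  map_smul' a c := by simp [Finset.smul_sum]

theorem aevalXPowSum_apply (c : Fin n → K[X]) :
    aevalXPowSum T n c = ∑ p, aeval T (c p) (X ^ (p : ℕ)) := rfl

variable {T n}

theorem ShiftsDegree.surjective_aevalXPowSum (hT : ShiftsDegree T n) (hn : 0 < n) :
    Function.Surjective (aevalXPowSum T n) := by
  suffices ∀ f, f ∈ LinearMap.range (aevalXPowSum T n) from this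
  intro f
  induction hd : f.degree using WellFoundedLT.induction generalizing f with
  | _ e ih =>
  rcases eq_or_ne f 0 with rfl | hf
  · exact zero_mem _
  obtain ⟨p, d, hpd⟩ : ∃ (p : Fin n) (d : ℕ), (p : ℕ) + d * n = f.natDegree :=
    ⟨⟨_, Nat.mod_lt _ hn⟩, _, Nat.mod_add_div' _ _⟩
  set t := aeval T (X ^ d : K[X]) (X ^ (p : ℕ))
  have ht_mem : t ∈ LinearMap.range (aevalXPowSum T n) :=
    ⟨Pi.single p (X ^ d), by
      rw [aevalXPowSum_apply, Finset.sum_eq_single p (fun q _ hq => by simp [hq]) (by simp)]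
      simp [t]⟩
  have ht : t.degree = f.degree := by
    rw [hT.degree_aeval_X_pow hn (pow_ne_zero _ X_ne_zero), natDegree_X_pow, hpd,
      degree_eq_natDegree hf]
  have ht0 : t ≠ 0 := by
    intro h; rw [h, degree_zero, eq_comm, degree_eq_bot] at ht; exact hf ht
  have ha : f.leadingCoeff / t.leadingCoeff ≠ 0 := by simp [hf, ht0]
  set s := C (f.leadingCoeff / t.leadingCoeff) * t
  have hs : s.degree = f.degree := by rw [degree_C_mul ha, ht]
  have hslead : s.leadingCoeff = f.leadingCoeff := by
    rw [leadingCoeff_mul, leadingCoeff_C, div_mul_cancel₀ _ (leadingCoeff_ne_zero.2 ht0)]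
  have hr : (f - s).degree < e := hd ▸ degree_sub_lt_left hs.symm hf hslead.symm
  rw [show f = (f - s) + s by abel]
  exact add_mem (ih _ hr _ rfl) (by simpa only [s, C_mul'] using Submodule.smul_mem _ _ ht_mem)

theorem ShiftsDegree.injective_aevalXPowSum (hT : ShiftsDegree T n) (hn : 0 < n) :
    Function.Injective (aevalXPowSum T n) := by
  rw [← LinearMap.ker_eq_bot, LinearMap.ker_eq_bot']
  intro c hc
  have hdisj : Set.Pairwise {p | p ∈ Finset.univ ∧ aeval T (c p) (X ^ (p : ℕ)) ≠ 0}
      (Ne on fun p => (aeval T (c p) (X ^ (p : ℕ))).degree) := by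
    rintro p ⟨-, hp⟩ q ⟨-, hq⟩ hpq
    have hcp : c p ≠ 0 := fun h => hp (by simp [h])
    have hcq : c q ≠ 0 := fun h => hq (by simp [h])
    rw [Function.onFun, hT.degree_aeval_X_pow hn hcp, hT.degree_aeval_X_pow hn hcq, Ne,
      Nat.cast_inj]
    intro h
    apply hpq
    ext
    simpa [Nat.add_mul_mod_self_right, Nat.mod_eq_of_lt] using congrArg (· % n) h
  have hsup := degree_sum_eq_of_disjoint _ _ hdisj
  rw [← aevalXPowSum_apply, hc, degree_zero, eq_comm, Finset.sup_eq_bot_iff] at hsup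
  funext p
  by_contra hcp
  exact WithBot.natCast_ne_bot _ (hT.degree_aeval_X_pow hn hcp _ ▸ hsup p (Finset.mem_univ p))

theorem shiftsDegree_mulLeft_add {A : K[X]} (hA : A.degree = n) (hn : 0 < n)
    {E : Module.End K K[X]} (hE : ∀ f, (E f).degree ≤ f.degree) :
    ShiftsDegree (LinearMap.mulLeft K A + E) n := by
  intro f
  rcases eq_or_ne f 0 with rfl | hf
  · simp
  have hAf : (A * f).degree = f.degree + n := by rw [degree_mul, hA, add_comm]
  have hlower : (E f).degree < (A * f).degree := by
    refine (hE f).trans_lt ?_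
    rw [hAf, degree_eq_natDegree hf]
    norm_cast
    omega
  rw [LinearMap.add_apply, LinearMap.mulLeft_apply, degree_add_eq_left_of_degree_lt hlower, hAf]

theorem degree_X_mul_derivative_le {R : Type*} [Semiring R] (f : R[X]) :
    (X * derivative f).degree ≤ f.degree := by
  rcases eq_or_ne f 0 with rfl | hf
  · simp
  calc (X * derivative f).degree ≤ (derivative f).degree + 1 := by
        rw [X_mul]; exact (degree_mul_le _ _).trans (by gcongr; exact degree_X_le)
    _ ≤ f.degree := Nat.WithBot.add_one_le_of_lt (degree_derivative_lt hf)

theorem degree_X_mul_derivative {R : Type*} [Semiring R] [Nontrivial R] [IsAddTorsionFree R]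
    {f : R[X]} (hf : f.natDegree ≠ 0) : (X * derivative f).degree = (f.natDegree : WithBot ℕ) := by
  rw [X_mul, degree_mul_X, degree_derivative hf]
  norm_cast
  omega

end Polynomial

theorem shiftsDegree_Hop {g : ℂ[X]} {n : ℕ} (hn : 1 ≤ n) (hdeg : g.natDegree = n) :
    ShiftsDegree (Hop g) n := by
  have hHop : Hop g = LinearMap.mulLeft ℂ (X * derivative g) +
      ((LinearMap.mulLeft ℂ X).comp derivative + (1 / 2 : ℂ) • LinearMap.id) := by
    unfold Hop; abel
  rw [hHop]
  refine shiftsDegree_mulLeft_add (by rw [degree_X_mul_derivative (by omega), hdeg]) hn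
    fun f => (degree_add_le _ _).trans (max_le (degree_X_mul_derivative_le f) ?_)
  exact degree_smul_le _ _

/-- Let `g ∈ ℂ[x]` have degree `n ≥ 1`. Then `ℂ[x]`, regarded as a module over the
polynomial ring `ℂ[H]` via the action `H·f = x f' + x g' f + (1/2) f`, is free of rank
`n` with basis `{1, x, …, x^{n-1}}`: these elements generate `ℂ[x]` over `ℂ[H]` and are
`ℂ[H]`-linearly independent. -/
theorem free_of_rank_degree (g : Polynomial ℂ) (n : ℕ) (hn : 1 ≤ n)
    (hdeg : g.natDegree = n) :
    (∀ f : Polynomial ℂ, ∃ c : Fin n → Polynomial ℂ,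
        f = ∑ p : Fin n, (Polynomial.aeval (Hop g) (c p)) ((X : Polynomial ℂ) ^ (p : ℕ))) ∧
    (∀ c : Fin n → Polynomial ℂ,
        (∑ p : Fin n, (Polynomial.aeval (Hop g) (c p)) ((X : Polynomial ℂ) ^ (p : ℕ))) = 0
        → ∀ p, c p = 0) := by
  have hH := shiftsDegree_Hop hn hdeg
  refine ⟨fun f => ?_, fun c hc => ?_⟩
  · obtain ⟨c, rfl⟩ := hH.surjective_aevalXPowSum hn f
    exact ⟨c, rfl⟩
  · exact congrFun (hH.injective_aevalXPowSum hn (hc.trans (map_zero _).symm))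
end

section
/- Let g ∈ ℂ[x] be nonconstant and consider the twisted polynomial module ℂ[x]·e^g over the Weyl algebra D(1) (where x acts by multiplication and ∂ acts as ∂ + g'). This module is simple: every nonzero D(1)-submodule equals the whole module. -/
open Polynomial

/-- Let `g ∈ ℂ[x]` be nonconstant. The exponential module `E(g) = ℂ[x]e^g` over the
Weyl algebra (where `x` acts by multiplication and `∂` acts by `f ↦ f' + g'f`) is
simple: every nonzero subspace closed under both actions is the whole module. -/
theorem exponential_module_simple (g : Polynomial ℂ) (hg : 0 < g.natDegree)
    (N : Submodule ℂ (Polynomial ℂ))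
    (hx : ∀ f ∈ N, (X : Polynomial ℂ) * f ∈ N)
    (hd : ∀ f ∈ N, derivative f + derivative g * f ∈ N)
    (hne : N ≠ ⊥) :
    N = ⊤ := by
  -- N is closed under multiplication by any polynomial
  have hmul : ∀ p : Polynomial ℂ, ∀ f ∈ N, p * f ∈ N := by
    intro p f hf
    induction p using Polynomial.induction_on' with
    | add p q hp hq => rw [add_mul]; exact N.add_mem hp hq
    | monomial n a =>
      have hxn : ∀ n : ℕ, (X : Polynomial ℂ) ^ n * f ∈ N := by
        intro n
        induction n with
        | zero => simpa using hf
        | succ n ih =>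
          have := hx _ ih
          rwa [pow_succ, mul_comm ((X:Polynomial ℂ)^n) X, mul_assoc]
      have : a • ((X : Polynomial ℂ) ^ n * f) ∈ N := N.smul_mem a (hxn n)
      simpa [← Polynomial.C_mul_X_pow_eq_monomial, Polynomial.smul_eq_C_mul, mul_assoc] using this
  -- N is closed under derivative
  have hder : ∀ f ∈ N, derivative f ∈ N := by
    intro f hf
    have h1 := hd f hf
    have h2 := hmul (derivative g) f hf
    have := N.sub_mem h1 h2
    simpa using this
  -- get a nonzero element
  obtain ⟨f, hfN, hf0⟩ := (Submodule.ne_bot_iff N).mp hne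
  -- show 1 ∈ N by induction on degree
  have key : ∀ n : ℕ, ∀ f : Polynomial ℂ, f.natDegree = n → f ∈ N → f ≠ 0 →
      (1 : Polynomial ℂ) ∈ N := by
    intro n
    induction n using Nat.strong_induction_on with
    | _ n ih =>
      intro f hn hfN hf0
      rcases Nat.eq_zero_or_pos n with h0 | hpos
      · subst h0
        obtain ⟨c, rfl⟩ := Polynomial.natDegree_eq_zero.mp hn
        have hc : c ≠ 0 := by simpa using hf0
        have := N.smul_mem c⁻¹ hfN
        rwa [Polynomial.smul_C, smul_eq_mul, inv_mul_cancel₀ hc, Polynomial.C_1] at this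
      · have hdf : derivative f ≠ 0 := by
          intro h
          have := Polynomial.natDegree_eq_zero_of_derivative_eq_zero h
          omega
        have hlt : (derivative f).natDegree < n := by
          have := Polynomial.natDegree_derivative_lt (p := f) (by omega)
          omega
        exact ih _ hlt (derivative f) rfl (hder f hfN) hdf
  have hone := key _ f rfl hfN hf0
  rw [eq_top_iff]
  intro p _
  simpa using hmul p 1 hone
end

section
/- Let g₁, g₂ ∈ ℂ[x] be nonconstant with g₁(0) = g₂(0) = 0. The twisted Weyl-algebra modules E(g₁) = ℂ[x]e^{g₁} and E(g₂) = ℂ[x]e^{g₂} (with ∂ acting as ∂ + gᵢ') are isomorphic as D(1)-modules if and only if g₁ = g₂. -/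
open Polynomial

/-- Let `g₁, g₂ ∈ ℂ[x]` be nonconstant with `g₁(0) = g₂(0) = 0`. The exponential
modules `E(g₁) = ℂ[x]e^{g₁}` and `E(g₂) = ℂ[x]e^{g₂}` over the Weyl algebra (with `x`
acting by multiplication and `∂` acting by `f ↦ f' + gᵢ'f`) are isomorphic as
`D(1)`-modules if and only if `g₁ = g₂`. -/
theorem exponential_modules_isomorphic_iff (g₁ g₂ : Polynomial ℂ)
    (h₁ : 0 < g₁.natDegree) (h₂ : 0 < g₂.natDegree)
    (hz₁ : g₁.eval 0 = 0) (hz₂ : g₂.eval 0 = 0) :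
    (∃ T : Polynomial ℂ ≃ₗ[ℂ] Polynomial ℂ,
        (∀ f : Polynomial ℂ, T ((X : Polynomial ℂ) * f) = (X : Polynomial ℂ) * T f) ∧
        (∀ f : Polynomial ℂ,
          T (derivative f + derivative g₁ * f) = derivative (T f) + derivative g₂ * T f))
    ↔ g₁ = g₂ := by
  constructor
  · rintro ⟨T, hX, hD⟩
    set p := T 1 with hp
    have hpow : ∀ n : ℕ, T (X ^ n) = X ^ n * T 1 := by
      intro n
      induction n with
      | zero => simp
      | succ n ih => rw [pow_succ, mul_comm (X ^ n) X, mul_assoc, hX, ih, ← mul_assoc]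
    have hmul : ∀ f : Polynomial ℂ, T f = p * f := by
      intro f
      induction f using Polynomial.induction_on' with
      | add a b ha hb => rw [map_add, ha, hb, mul_add]
      | monomial n a =>
          rw [← Polynomial.smul_X_eq_monomial, map_smul, hpow]
          ring_nf
          rw [mul_comm (X ^ n) (T 1), mul_smul_comm]
    have hp0 : p ≠ 0 := by
      intro h
      have : (1 : Polynomial ℂ) = 0 := T.injective (by simp [← hp, h])
      exact one_ne_zero this
    have key : derivative p = (derivative g₁ - derivative g₂) * p := by
      have := hD 1
      rw [hmul (derivative 1 + derivative g₁ * 1)] at this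
      simp only [derivative_one, mul_one, zero_add] at this
      rw [← hp] at this
      linear_combination -this
    have hder : derivative g₁ = derivative g₂ := by
      by_contra hne
      have hd0 : derivative g₁ - derivative g₂ ≠ 0 := sub_ne_zero.mpr hne
      have hprod : ((derivative g₁ - derivative g₂) * p).natDegree
          = (derivative g₁ - derivative g₂).natDegree + p.natDegree :=
        natDegree_mul hd0 hp0
      by_cases hpn : p.natDegree = 0
      · have : derivative p = 0 := by
          rw [Polynomial.eq_C_of_natDegree_eq_zero hpn]; simp
        rw [this] at key
        exact (mul_ne_zero hd0 hp0) key.symm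
      · have hlt : (derivative p).natDegree < p.natDegree := natDegree_derivative_lt hpn
        rw [key, hprod] at hlt
        omega
    have : derivative (g₁ - g₂) = 0 := by rw [derivative_sub, hder, sub_self]
    obtain ⟨c, hc⟩ : ∃ c, g₁ - g₂ = C c := ⟨_, eq_C_of_derivative_eq_zero this⟩
    have : c = 0 := by
      have := congrArg (Polynomial.eval 0) hc
      simp [hz₁, hz₂] at this
      exact this.symm
    rw [this] at hc
    simpa [sub_eq_zero] using hc
  · rintro rfl
    exact ⟨LinearEquiv.refl ℂ _, fun f => rfl, fun f => rfl⟩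
end

section
/- Let g ∈ ℂ[x]. There exists a ℂ-linear involution E on ℂ[x] satisfying E² = id, E∘(multiplication by x) = -(multiplication by x)∘E, and E∘D = -D∘E where D(f) = f' + g'f, if and only if g(-x) = g(x) (i.e. g is an even polynomial). -/
open Polynomial

private noncomputable def negComp : Polynomial ℂ →ₗ[ℂ] Polynomial ℂ where
  toFun p := p.comp (-X)
  map_add' p q := by simp [add_comp]
  map_smul' c p := by simp [smul_comp]

private lemma negComp_apply (p : Polynomial ℂ) : negComp p = p.comp (-X) := rfl

private lemma deriv_comp_negX (p : Polynomial ℂ) :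
    derivative (p.comp (-X)) = -(derivative p).comp (-X) := by
  rw [derivative_comp]; simp

private lemma E_eq (E : Polynomial ℂ →ₗ[ℂ] Polynomial ℂ)
    (hX : ∀ f, E ((X : Polynomial ℂ) * f) = -((X : Polynomial ℂ) * E f)) (p : Polynomial ℂ) :
    E p = p.comp (-X) * E 1 := by
  induction p using Polynomial.induction_on with
  | C a => rw [show (C a : Polynomial ℂ) = a • 1 by simp [Polynomial.smul_eq_C_mul],
      map_smul]; simp [Polynomial.smul_eq_C_mul, mul_assoc]
  | add p q hp hq => rw [map_add, hp, hq, add_comp]; ring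
  | monomial n a ih =>
      have : (C a * X ^ (n + 1) : Polynomial ℂ) = X * (C a * X ^ n) := by ring
      rw [this, hX, ih]
      simp [mul_comp, pow_succ]
      ring

/-- Let `g ∈ ℂ[x]`. There exists a `ℂ`-linear involution `E` of `ℂ[x]` anticommuting
with multiplication by `x` and with the twisted derivative `D(f) = f' + g'f` if and
only if `g` is an even polynomial, i.e. `g(-x) = g(x)`. -/
theorem grading_involution_iff_even (g : Polynomial ℂ) :
    (∃ E : Polynomial ℂ →ₗ[ℂ] Polynomial ℂ,
        (∀ f, E (E f) = f) ∧
        (∀ f, E ((X : Polynomial ℂ) * f) = -((X : Polynomial ℂ) * E f)) ∧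
        (∀ f, E (derivative f + derivative g * f)
            = -(derivative (E f) + derivative g * E f)))
    ↔ g.comp (-(X : Polynomial ℂ)) = g := by
  constructor
  · rintro ⟨E, hinv, hX, hD⟩
    set e := E 1 with he
    -- e is a nonzero constant
    have hee : e.comp (-X) * e = 1 := by
      have := hinv 1
      rwa [E_eq E hX e] at this
    have hne : e ≠ 0 := by
      intro h; rw [h, mul_zero] at hee; exact one_ne_zero hee.symm
    have hnd : e.natDegree = 0 := by
      have h1 : (e.comp (-X)) ≠ 0 := fun h => by simp [h] at hee
      have := natDegree_mul h1 hne
      rw [hee, natDegree_one] at this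
      omega
    obtain ⟨c, hc⟩ : ∃ c : ℂ, e = C c := ⟨e.coeff 0, (Polynomial.eq_C_of_natDegree_eq_zero hnd)⟩
    have hcne : (C c : Polynomial ℂ) ≠ 0 := hc ▸ hne
    -- from hD at f = 1: g'.comp(-X) = -g'
    have h1 := hD 1
    rw [derivative_one, mul_one, zero_add, E_eq E hX, ← he, hc] at h1
    simp only [derivative_C] at h1
    have hgd : (derivative g).comp (-X) = -(derivative g) := by
      have : ((derivative g).comp (-X)) * C c = (-(derivative g)) * C c := by
        rw [h1]; ring
      exact mul_right_cancel₀ hcne this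
    -- hence derivative (g.comp (-X) - g) = 0
    have hder : derivative (g.comp (-X) - g) = 0 := by
      rw [map_sub, deriv_comp_negX, hgd]; ring
    have hconst := Polynomial.eq_C_of_natDegree_eq_zero
      (Polynomial.natDegree_eq_zero_of_derivative_eq_zero hder)
    have hcoeff : (g.comp (-X) - g).coeff 0 = 0 := by
      rw [coeff_sub, coeff_zero_eq_eval_zero, coeff_zero_eq_eval_zero, eval_comp]
      simp
    rw [hcoeff, map_zero] at hconst
    have := sub_eq_zero.mp hconst
    exact this
  · intro hg
    refine ⟨negComp, ?_, ?_, ?_⟩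
    · intro f
      simp only [negComp_apply, comp_assoc]
      simp
    · intro f
      simp [negComp_apply, mul_comp]
    · intro f
      have hgd : (derivative g).comp (-X) = -(derivative g) := by
        have := congrArg derivative hg
        rw [deriv_comp_negX] at this
        linear_combination -this
      simp only [negComp_apply, add_comp, mul_comp, hgd, deriv_comp_negX]
      ring
end
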